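/- Let all variables be discrete and suppose ĥ satisfies the true outcome bridge equation E[Y | Z, A, X] = E[ĥ(W,A,X) | Z, A, X] a.s., and p̂(w|a,x) = p(w|a,x) for all w,x. Define η̂₁(x,a',a) := Σ_w ĥ(w,a',x)·p(w|a,x). Then for arbitrary functions q̂_a and p̂(A|X) > 0, E[ I(A=a')/p̂(A=a'|X)·q̂_a(Z,A,X)·(Y − ĥ(W,A,X)) + I(A=a)/p̂(A=a|X)·(ĥ(W,a',X) − η̂₁(X,a',a)) + η̂₁(X,a',a) ] = E[ Σ_w ĥ(w,a',X)·p(w|a,X) ]. -/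
import Mathlib


open Finset
open scoped Classical

noncomputable section

/-- Probability of an event under weights `mu`. -/
def pr {O : Type} [Fintype O] (mu : O -> Real) (s : O -> Prop) : Real :=
  Finset.univ.sum (fun w => if s w then mu w else 0)

/-- Conditional probability `P(s | t)`. -/
def cpr {O : Type} [Fintype O] (mu : O -> Real) (s t : O -> Prop) : Real :=
  pr mu (fun w => s w /\ t w) / pr mu t

/-- Expectation of `f`. -/
def expec {O : Type} [Fintype O] (mu : O -> Real) (f : O -> Real) : Real :=
  Finset.univ.sum (fun w => f w * mu w)

/-- Conditional expectation `E[f | t]`. -/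
def cexp {O : Type} [Fintype O] (mu : O -> Real) (f : O -> Real) (t : O -> Prop) : Real :=
  (Finset.univ.sum (fun w => if t w then f w * mu w else 0)) / pr mu t

lemma pr_nonneg {O : Type} [Fintype O] (mu : O -> Real) (h : ∀ o, 0 ≤ mu o) (s : O -> Prop) :
    0 ≤ pr mu s := by
  apply Finset.sum_nonneg; intro o _; split <;> simp [h o]

lemma mu_eq_zero {O : Type} [Fintype O] (mu : O -> Real) (h : ∀ o, 0 ≤ mu o) (s : O -> Prop)
    (hpr : pr mu s = 0) (o : O) (ho : s o) : mu o = 0 := by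
  have := (Finset.sum_eq_zero_iff_of_nonneg (by intro i _; split <;> simp [h i])).1 hpr o (mem_univ o)
  simpa [ho] using this

lemma fiber_sum {O α : Type} [Fintype O] [Fintype α] [DecidableEq α]
    (f : O -> Real) (g : O -> α) :
    Finset.univ.sum f = Finset.univ.sum (fun c : α => Finset.univ.sum
      (fun o => if g o = c then f o else 0)) := by
  rw [Finset.sum_comm]
  apply Finset.sum_congr rfl
  intro o _
  simp [Finset.sum_ite_eq]

theorem stmt11
    {O TA TM TZ TW TX : Type}
    [Fintype O] [Fintype TA] [Fintype TM] [Fintype TZ] [Fintype TW] [Fintype TX]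
    [DecidableEq TA] [DecidableEq TM] [DecidableEq TZ] [DecidableEq TW] [DecidableEq TX]
    (mu : O -> Real) (hmu0 : forall o : O, 0 <= mu o)
    (hmu1 : Finset.univ.sum mu = 1)
    (A : O -> TA) (Y : O -> Real) (M : O -> TM) (Z : O -> TZ) (W : O -> TW) (X : O -> TX)
    (a a' : TA) (hhat : TW -> TA -> TX -> Real)
    (hbridge : forall (z : TZ) (t : TA) (x : TX),
      0 < pr mu (fun o => Z o = z /\ A o = t /\ X o = x) ->
      cexp mu Y (fun o => Z o = z /\ A o = t /\ X o = x) =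
      cexp mu (fun o => hhat (W o) t x) (fun o => Z o = z /\ A o = t /\ X o = x))
    (qhat : TZ -> TA -> TX -> Real) (pA : TA -> TX -> Real)
    (hpA : forall (t : TA) (x : TX), 0 < pA t x)
    (hpos : forall (t : TA) (x : TX), 0 < pr mu (fun o => X o = x) ->
      0 < pr mu (fun o => A o = t /\ X o = x)) :
    expec mu (fun o =>
      (if A o = a' then (1 : Real) else 0) / pA a' (X o) *
        qhat (Z o) (A o) (X o) * (Y o - hhat (W o) (A o) (X o)) +
      (if A o = a then (1 : Real) else 0) / pA a (X o) *
        (hhat (W o) a' (X o) -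
          Finset.univ.sum (fun v : TW =>
            hhat v a' (X o) * cpr mu (fun o' => W o' = v) (fun o' => A o' = a /\ X o' = X o))) +
      Finset.univ.sum (fun v : TW =>
        hhat v a' (X o) * cpr mu (fun o' => W o' = v) (fun o' => A o' = a /\ X o' = X o))) =
    expec mu (fun o => Finset.univ.sum (fun v : TW =>
      hhat v a' (X o) * cpr mu (fun o' => W o' = v) (fun o' => A o' = a /\ X o' = X o))) := by
  set η : TX -> Real := fun x => Finset.univ.sum (fun v : TW =>
      hhat v a' x * cpr mu (fun o' => W o' = v) (fun o' => A o' = a /\ X o' = x)) with hη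
  set f1 : O -> Real := fun o =>
      (if A o = a' then (1 : Real) else 0) / pA a' (X o) *
        qhat (Z o) (A o) (X o) * (Y o - hhat (W o) (A o) (X o)) with hf1
  set f2 : O -> Real := fun o =>
      (if A o = a then (1 : Real) else 0) / pA a (X o) *
        (hhat (W o) a' (X o) - η (X o)) with hf2
  have hsplit : expec mu (fun o => f1 o + f2 o + η (X o)) =
      expec mu f1 + expec mu f2 + expec mu (fun o => η (X o)) := by
    simp only [expec, add_mul, Finset.sum_add_distrib]
  -- S(z,x) = 0
  have hS : ∀ (z : TZ) (x : TX),
      Finset.univ.sum (fun o => if Z o = z ∧ A o = a' ∧ X o = x then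
        (Y o - hhat (W o) a' x) * mu o else 0) = 0 := by
    intro z x
    set t : O -> Prop := fun o => Z o = z ∧ A o = a' ∧ X o = x with ht
    have hsub : Finset.univ.sum (fun o => if t o then (Y o - hhat (W o) a' x) * mu o else 0) =
        Finset.univ.sum (fun o => if t o then Y o * mu o else 0) -
        Finset.univ.sum (fun o => if t o then hhat (W o) a' x * mu o else 0) := by
      rw [← Finset.sum_sub_distrib]
      apply Finset.sum_congr rfl; intro o _
      split <;> ring
    rcases lt_or_eq_of_le (pr_nonneg mu hmu0 t) with hp | hp
    · have hb := hbridge z a' x hp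
      simp only [cexp] at hb
      rw [div_eq_div_iff (ne_of_gt hp) (ne_of_gt hp)] at hb
      have hnum := mul_right_cancel₀ (ne_of_gt hp) hb
      rw [hsub, sub_eq_zero]; simp only [ht]; convert hnum using 2 <;> congr 1
    · rw [hsub]
      have hz : ∀ o, t o → mu o = 0 := mu_eq_zero mu hmu0 t hp.symm
      have e1 : ∀ (g : O -> Real),
          Finset.univ.sum (fun o => if t o then g o * mu o else 0) = 0 := by
        intro g; apply Finset.sum_eq_zero; intro o _
        split
        · next h => rw [hz o h]; ring
        · rfl
      rw [e1, e1, sub_self]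
  -- expec f1 = 0
  have h1 : expec mu f1 = 0 := by
    rw [expec, fiber_sum (fun o => f1 o * mu o) (fun o => (Z o, X o))]
    apply Finset.sum_eq_zero
    intro c _
    obtain ⟨z, x⟩ := c
    have : Finset.univ.sum (fun o => if (Z o, X o) = (z, x) then f1 o * mu o else 0) =
        (qhat z a' x / pA a' x) * Finset.univ.sum (fun o =>
          if Z o = z ∧ A o = a' ∧ X o = x then (Y o - hhat (W o) a' x) * mu o else 0) := by
      rw [Finset.mul_sum]
      apply Finset.sum_congr rfl
      intro o _
      simp only [hf1, Prod.mk.injEq]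
      by_cases hz : Z o = z
      · by_cases hx : X o = x
        · by_cases ha : A o = a'
          · simp only [hz, hx, ha, and_self, if_true, true_and]
            ring
          · simp [hz, hx, ha]
        · simp [hx]
      · simp [hz]
    rw [this, hS z x, mul_zero]
  -- expec f2 = 0
  have hT : ∀ x : TX,
      Finset.univ.sum (fun o => if A o = a ∧ X o = x then
        (hhat (W o) a' x - η x) * mu o else 0) = 0 := by
    intro x
    set t : O -> Prop := fun o => A o = a ∧ X o = x with ht
    rcases lt_or_eq_of_le (pr_nonneg mu hmu0 t) with hp | hp
    · have hsub : Finset.univ.sum (fun o => if t o then (hhat (W o) a' x - η x) * mu o else 0) =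
          Finset.univ.sum (fun o => if t o then hhat (W o) a' x * mu o else 0) -
          η x * pr mu t := by
        rw [pr, Finset.mul_sum, ← Finset.sum_sub_distrib]
        apply Finset.sum_congr rfl; intro o _
        split <;> ring
      rw [hsub]
      have hfib : Finset.univ.sum (fun o => if t o then hhat (W o) a' x * mu o else 0) =
          Finset.univ.sum (fun v : TW =>
            hhat v a' x * pr mu (fun o => W o = v ∧ A o = a ∧ X o = x)) := by
        rw [fiber_sum (fun o => if t o then hhat (W o) a' x * mu o else 0) W]
        apply Finset.sum_congr rfl
        intro v _
        rw [pr, Finset.mul_sum]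
        apply Finset.sum_congr rfl
        intro o _
        by_cases hw : W o = v
        · by_cases hto : A o = a ∧ X o = x
          · simp [ht, hw, hto]
          · simp [ht, hw, hto]
        · simp [hw]
      have hηx : η x * pr mu t = Finset.univ.sum (fun v : TW =>
          hhat v a' x * pr mu (fun o => W o = v ∧ A o = a ∧ X o = x)) := by
        rw [hη, Finset.sum_mul]
        apply Finset.sum_congr rfl
        intro v _
        rw [cpr, mul_assoc, div_mul_cancel₀ _ (ne_of_gt hp)]
      rw [hfib, hηx, sub_self]
    · have hz : ∀ o, t o → mu o = 0 := mu_eq_zero mu hmu0 t hp.symm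
      apply Finset.sum_eq_zero; intro o _
      split
      · next h => rw [hz o h]; ring
      · rfl
  have h2 : expec mu f2 = 0 := by
    rw [expec, fiber_sum (fun o => f2 o * mu o) X]
    apply Finset.sum_eq_zero
    intro x _
    have : Finset.univ.sum (fun o => if X o = x then f2 o * mu o else 0) =
        (1 / pA a x) * Finset.univ.sum (fun o =>
          if A o = a ∧ X o = x then (hhat (W o) a' x - η x) * mu o else 0) := by
      rw [Finset.mul_sum]
      apply Finset.sum_congr rfl
      intro o _
      simp only [hf2]
      by_cases hx : X o = x
      · by_cases ha : A o = a
        · simp only [hx, ha, and_self, if_true]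
          ring
        · simp [hx, ha]
      · simp [hx]
    rw [this, hT x, mul_zero]
  calc expec mu (fun o => f1 o + f2 o + η (X o))
      = expec mu f1 + expec mu f2 + expec mu (fun o => η (X o)) := hsplit
    _ = expec mu (fun o => η (X o)) := by rw [h1, h2]; ring
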